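/- Let T, K₀, λ₁, λ₂ > 0 with λ₁ ≠ λ₂. Suppose: (a) P, Π : [0,T] → (symmetric n×n real matrices) and Θ̄_T : [0,T] → ℝ^{m×n} are continuous with ‖P(t)‖ ≤ K₀ for all t; (b) symmetric n×n matrices P∞, Π∞ and a matrix Θ̄* ∈ ℝ^{m×n} are given with ‖P(t) − P∞‖ ≤ K₀ e^{−λ₁(T−t)}, ‖Π(t) − Π∞‖ ≤ K₀ e^{−λ₁(T−t)}, and ‖Θ̄_T(t) − Θ̄*‖ ≤ K₀ e^{−λ₁(T−t)} for all t ∈ [0,T]; (c) ‖exp(t(A + Ā + BΘ̄*)ᵀ)‖ ≤ K₀ e^{−λ₂ t} for all t ≥ 0; (d) p : [0,T] → ℝⁿ is differentiable with p′(t) + (A + Ā + BΘ̄_T(t))ᵀ p(t) + (C + C̄ + DΘ̄_T(t))ᵀ P(t) σ + Θ̄_T(t)ᵀ r + Π(t) b + q = 0 for all t ∈ [0,T], p(T) = 0, and |p(t)| ≤ K₀ for all t ∈ [0,T]; (e) p∞ ∈ ℝⁿ satisfies (A + Ā + BΘ̄*)ᵀ p∞ + (C + C̄ + DΘ̄*)ᵀ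 P∞ σ + (Θ̄*)ᵀ r + Π∞ b + q = 0. Then there exist constants K > 0 and λ ∈ (0, min{λ₁, λ₂}] depending only on the fixed matrices and vectors, K₀, λ₁, λ₂, |p∞| (and not on T) such that |p(t) − p∞| ≤ K e^{−λ(T−t)} for all t ∈ [0,T]. -/

import Mathlib

open Matrix

/-- Frobenius norm of a real matrix. -/
noncomputable def frobNorm {k l : ℕ} (M : Matrix (Fin k) (Fin l) ℝ) : ℝ :=
  Real.sqrt (∑ i, ∑ j, (M i j) ^ 2)

/-- Euclidean norm of a vector in `ℝⁿ`. -/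
noncomputable def eNorm {k : ℕ} (v : Fin k → ℝ) : ℝ :=
  Real.sqrt (∑ i, (v i) ^ 2)

/-- Matrix exponential of a real square matrix. -/
noncomputable def matExp {k : ℕ} (M : Matrix (Fin k) (Fin k) ℝ) : Matrix (Fin k) (Fin k) ℝ :=
  NormedSpace.exp M

/-!
Write `N = (A + Ā + BΘ̄*)ᵀ`. Subtracting the algebraic equation for `p∞` from the ODE shows that
`e = p - p∞` solves `e' = -N e - f`, where the defect `f` is linear in the coefficient errors
`Θ̄_T - Θ̄*`, `P - P∞`, `Π - Π∞` with coefficients controlled by `|p|, ‖P‖ ≤ K₀`, so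
`|f(u)| ≤ C e^{-λ₁(T-u)}`. The function `u ↦ exp((u-t)N) e(u)` has derivative `-exp((u-t)N) f(u)`,
of norm at most `K₀ C e^{-min(λ₁,λ₂)(T-t)}` on `[t, T]`; the mean value inequality and `e(T) = -p∞`
give `|e(t)| ≤ K₀ |p∞| e^{-λ₂(T-t)} + K₀ C (T-t) e^{-min(λ₁,λ₂)(T-t)}`. The factor `T - t` is
absorbed by halving the rate: `s e^{-μs} ≤ (2/μ) e^{-μs/2}`.
-/

open Set Real WithLp

attribute [local instance] Matrix.frobeniusNormedAddCommGroup

theorem exp_mul_exp_le_exp_min {lam₁ lam₂ t u T : ℝ} (htu : t ≤ u) (huT : u ≤ T) :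
    exp (-lam₂ * (u - t)) * exp (-lam₁ * (T - u)) ≤ exp (-min lam₁ lam₂ * (T - t)) := by
  rw [← exp_add, exp_le_exp]
  nlinarith [min_le_left lam₁ lam₂, min_le_right lam₁ lam₂]

theorem mul_exp_neg_le {μ : ℝ} (hμ : 0 < μ) (s : ℝ) :
    s * exp (-μ * s) ≤ 2 / μ * exp (-(μ / 2) * s) := by
  have h := add_one_le_exp (μ / 2 * s)
  have hsplit : exp (-(μ / 2) * s) = exp (μ / 2 * s) * exp (-μ * s) := by
    rw [← exp_add]; ring_nf
  rw [hsplit, ← mul_assoc]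
  gcongr
  rw [div_mul_eq_mul_div, le_div_iff₀ hμ]
  linarith

theorem add_mul_exp_neg_le {a c μ lam₂ s : ℝ} (ha : 0 ≤ a) (hc : 0 ≤ c) (hμ : 0 < μ)
    (hμ₂ : μ ≤ lam₂) (hs : 0 ≤ s) :
    a * exp (-lam₂ * s) + c * s * exp (-μ * s) ≤ (a + c * (2 / μ)) * exp (-(μ / 2) * s) := by
  have h₂ : exp (-lam₂ * s) ≤ exp (-(μ / 2) * s) := exp_le_exp.2 (by nlinarith)
  have hμs := mul_le_mul_of_nonneg_left (mul_exp_neg_le hμ s) hc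
  nlinarith

theorem norm_le_norm_exp_smul_apply_add_of_hasDerivAt {E : Type*} [NormedAddCommGroup E]
    [NormedSpace ℝ E] [CompleteSpace E] (L : E →L[ℝ] E) {e g : ℝ → E} {t T c : ℝ} (htT : t ≤ T)
    (he : ∀ u ∈ Icc t T, HasDerivAt e (g u - L (e u)) u)
    (hg : ∀ u ∈ Icc t T, ‖NormedSpace.exp ((u - t) • L) (g u)‖ ≤ c) :
    ‖e t‖ ≤ ‖NormedSpace.exp ((T - t) • L) (e T)‖ + c * (T - t) := by
  set w : ℝ → E := fun u => NormedSpace.exp ((u - t) • L) (e u)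
  have hw : ∀ u ∈ Icc t T, HasDerivAt w (NormedSpace.exp ((u - t) • L) (g u)) u := by
    intro u hu
    have hS := (hasDerivAt_exp_smul_const (𝕂 := ℝ) L (u - t)).comp_sub_const u t
    convert hS.clm_apply (he u hu) using 1
    simp [map_sub]
  have hmv := norm_image_sub_le_of_norm_deriv_le_segment'
    (fun u hu => (hw u hu).hasDerivWithinAt) (fun u hu => hg u (Ico_subset_Icc_self hu))
    T (right_mem_Icc.2 htT)
  calc ‖e t‖ = ‖w T - (w T - w t)‖ := by simp [w]
    _ ≤ ‖w T‖ + ‖w T - w t‖ := norm_sub_le _ _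
    _ ≤ _ := add_le_add le_rfl hmv

theorem toEuclideanCLM_matExp {k : ℕ} (M : Matrix (Fin k) (Fin k) ℝ) :
    toEuclideanCLM (𝕜 := ℝ) (matExp M) = NormedSpace.exp (toEuclideanCLM (𝕜 := ℝ) M) := by
  -- `map_exp` needs some Banach algebra norm on matrices; `matExp` only sees the topology.
  open scoped Matrix.Norms.Operator in
  exact NormedSpace.map_exp (toEuclideanCLM (𝕜 := ℝ) (n := Fin k))
    (toEuclideanCLM (𝕜 := ℝ) (n := Fin k)).toAlgEquiv.toLinearMap.continuous_of_finiteDimensional M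

section MatrixNorms

variable {k l o : ℕ}

theorem frobNorm_eq_norm (M : Matrix (Fin k) (Fin l) ℝ) : frobNorm M = ‖M‖ := by
  simp [frobNorm, frobenius_norm_def, sqrt_eq_rpow]

theorem eNorm_eq_norm (v : Fin k → ℝ) : eNorm v = ‖toLp 2 v‖ := by
  simp [eNorm, EuclideanSpace.norm_eq]

theorem norm_toLp_mulVec_le (M : Matrix (Fin k) (Fin l) ℝ) (v : Fin l → ℝ) :
    ‖toLp 2 (M *ᵥ v)‖ ≤ ‖M‖ * ‖toLp 2 v‖ := by
  calc ‖toLp 2 (M *ᵥ v)‖ = ‖replicateCol (Fin 1) (M *ᵥ v)‖ := (frobenius_norm_replicateCol _).symm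
    _ = ‖M * replicateCol (Fin 1) v‖ := by rw [replicateCol_mulVec]
    _ ≤ ‖M‖ * ‖replicateCol (Fin 1) v‖ := frobenius_norm_mul _ _
    _ = ‖M‖ * ‖toLp 2 v‖ := congrArg (‖M‖ * ·) (frobenius_norm_replicateCol _)

theorem norm_toLp_transpose_mulVec_le (M : Matrix (Fin k) (Fin l) ℝ) (v : Fin k → ℝ) :
    ‖toLp 2 (Mᵀ *ᵥ v)‖ ≤ ‖M‖ * ‖toLp 2 v‖ := by
  simpa using norm_toLp_mulVec_le Mᵀ v

theorem norm_toLp_transpose_mul_mulVec_le (M : Matrix (Fin k) (Fin l) ℝ)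
    (M' : Matrix (Fin l) (Fin o) ℝ) (v : Fin k → ℝ) :
    ‖toLp 2 ((M * M')ᵀ *ᵥ v)‖ ≤ ‖M‖ * ‖M'‖ * ‖toLp 2 v‖ :=
  (norm_toLp_transpose_mulVec_le _ v).trans (by gcongr; exact frobenius_norm_mul M M')

theorem norm_toEuclideanCLM_le (M : Matrix (Fin k) (Fin k) ℝ) :
    ‖toEuclideanCLM (𝕜 := ℝ) M‖ ≤ ‖M‖ :=
  ContinuousLinearMap.opNorm_le_bound _ (norm_nonneg M) fun x =>
    norm_toLp_mulVec_le M (ofLp x)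

theorem norm_toLp_sub_le_of_hasDerivAt {N : Matrix (Fin k) (Fin k) ℝ} {x f : ℝ → Fin k → ℝ}
    {y : Fin k → ℝ} {K₀ C lam₁ lam₂ t T : ℝ} (htT : t ≤ T)
    (hN : ∀ s, 0 ≤ s → ‖matExp (s • N)‖ ≤ K₀ * exp (-lam₂ * s))
    (hx : ∀ u ∈ Icc t T, HasDerivAt x (-(N *ᵥ (x u - y)) - f u) u)
    (hf : ∀ u ∈ Icc t T, ‖toLp 2 (f u)‖ ≤ C * exp (-lam₁ * (T - u))) :
    ‖toLp 2 (x t - y)‖ ≤ K₀ * ‖toLp 2 (x T - y)‖ * exp (-lam₂ * (T - t))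
      + K₀ * C * (T - t) * exp (-min lam₁ lam₂ * (T - t)) := by
  set L := toEuclideanCLM (𝕜 := ℝ) N
  have hS : ∀ s, 0 ≤ s → ‖NormedSpace.exp (s • L)‖ ≤ K₀ * exp (-lam₂ * s) := fun s hs => by
    rw [← map_smul, ← toEuclideanCLM_matExp]
    exact (norm_toEuclideanCLM_le _).trans (hN s hs)
  have hK₀ : 0 ≤ K₀ := by simpa using (norm_nonneg _).trans (hS 0 le_rfl)
  have hC : 0 ≤ C := by simpa using (norm_nonneg _).trans (hf T (right_mem_Icc.2 htT))
  have he : ∀ u ∈ Icc t T,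
      HasDerivAt (fun u => toLp 2 (x u - y)) (toLp 2 (-f u) - L (toLp 2 (x u - y))) u := by
    intro u hu
    refine ((PiLp.hasFDerivAt_toLp 2 _).comp_hasDerivAt u ((hx u hu).sub_const y)).congr_deriv ?_
    rw [toEuclideanCLM_toLp, ← toLp_sub, neg_sub_comm]
    rfl
  refine (norm_le_norm_exp_smul_apply_add_of_hasDerivAt L
    (c := K₀ * C * exp (-min lam₁ lam₂ * (T - t))) htT he fun u hu => ?_).trans ?_
  · calc _ ≤ ‖NormedSpace.exp ((u - t) • L)‖ * ‖toLp 2 (-f u)‖ := ContinuousLinearMap.le_opNorm _ _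
      _ ≤ K₀ * exp (-lam₂ * (u - t)) * (C * exp (-lam₁ * (T - u))) := by
        gcongr
        · exact hS _ (sub_nonneg.2 hu.1)
        · simpa using hf u hu
      _ = K₀ * C * (exp (-lam₂ * (u - t)) * exp (-lam₁ * (T - u))) := by ring
      _ ≤ K₀ * C * exp (-min lam₁ lam₂ * (T - t)) := by
        gcongr; exact exp_mul_exp_le_exp_min hu.1 hu.2
  · have hT := (ContinuousLinearMap.le_opNorm _ _).trans
      (mul_le_mul_of_nonneg_right (hS (T - t) (sub_nonneg.2 htT)) (norm_nonneg (toLp 2 (x T - y))))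
    linarith

end MatrixNorms

section Drift

variable {n m : ℕ} (A Abar C Cbar : Matrix (Fin n) (Fin n) ℝ) (B D : Matrix (Fin n) (Fin m) ℝ)
  (b sig qv : Fin n → ℝ) (rv : Fin m → ℝ)

/-- The equation for `p` reads `p' + drift (Θ̄_T t) (P t) (Π t) (p t) = 0`, the one for `p∞`
reads `drift Θ̄* P∞ Π∞ p∞ = 0`. -/
def drift (Θ : Matrix (Fin m) (Fin n) ℝ) (P Q : Matrix (Fin n) (Fin n) ℝ) (x : Fin n → ℝ) :
    Fin n → ℝ :=
  (A + Abar + B * Θ)ᵀ *ᵥ x + (C + Cbar + D * Θ)ᵀ *ᵥ (P *ᵥ sig) + Θᵀ *ᵥ rv + Q *ᵥ b + qv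

theorem drift_sub_drift_sub (Θ Θ' : Matrix (Fin m) (Fin n) ℝ) (P P' Q Q' : Matrix (Fin n) (Fin n) ℝ)
    (x x' : Fin n → ℝ) :
    drift A Abar C Cbar B D b sig qv rv Θ P Q x - drift A Abar C Cbar B D b sig qv rv Θ' P' Q' x'
        - (A + Abar + B * Θ')ᵀ *ᵥ (x - x') =
      (B * (Θ - Θ'))ᵀ *ᵥ x + (D * (Θ - Θ'))ᵀ *ᵥ (P *ᵥ sig)
        + (C + Cbar + D * Θ')ᵀ *ᵥ ((P - P') *ᵥ sig) + (Θ - Θ')ᵀ *ᵥ rv + (Q - Q') *ᵥ b := by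
  simp only [drift, transpose_add, transpose_mul, transpose_sub, add_mulVec, sub_mulVec,
    mulVec_sub, ← mulVec_mulVec]
  abel

theorem norm_drift_sub_drift_sub_le (Θ Θ' : Matrix (Fin m) (Fin n) ℝ)
    (P P' Q Q' : Matrix (Fin n) (Fin n) ℝ) (x x' : Fin n → ℝ) :
    ‖toLp 2 (drift A Abar C Cbar B D b sig qv rv Θ P Q x
        - drift A Abar C Cbar B D b sig qv rv Θ' P' Q' x' - (A + Abar + B * Θ')ᵀ *ᵥ (x - x'))‖ ≤
      (‖B‖ * ‖toLp 2 x‖ + ‖D‖ * ‖P‖ * ‖toLp 2 sig‖ + ‖toLp 2 rv‖) * ‖Θ - Θ'‖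
        + ‖C + Cbar + D * Θ'‖ * ‖toLp 2 sig‖ * ‖P - P'‖ + ‖toLp 2 b‖ * ‖Q - Q'‖ := by
  rw [drift_sub_drift_sub]
  simp only [toLp_add]
  refine (norm_add_le _ _).trans ((add_le_add norm_add₄_le le_rfl).trans ?_)
  calc _ ≤ ‖B‖ * ‖Θ - Θ'‖ * ‖toLp 2 x‖ + ‖D‖ * ‖Θ - Θ'‖ * (‖P‖ * ‖toLp 2 sig‖)
          + ‖C + Cbar + D * Θ'‖ * (‖P - P'‖ * ‖toLp 2 sig‖) + ‖Θ - Θ'‖ * ‖toLp 2 rv‖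
          + ‖Q - Q'‖ * ‖toLp 2 b‖ := by
        gcongr
        · exact norm_toLp_transpose_mul_mulVec_le _ _ _
        · exact (norm_toLp_transpose_mul_mulVec_le _ _ _).trans
            (by gcongr; exact norm_toLp_mulVec_le _ _)
        · exact (norm_toLp_transpose_mulVec_le _ _).trans (by gcongr; exact norm_toLp_mulVec_le _ _)
        · exact norm_toLp_transpose_mulVec_le _ _
        · exact norm_toLp_mulVec_le _ _
    _ = _ := by ring

end Drift

theorem p_convergence_general {n m : ℕ}
    (A Abar C Cbar : Matrix (Fin n) (Fin n) ℝ)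
    (B D : Matrix (Fin n) (Fin m) ℝ)
    (b sig qv : Fin n → ℝ) (rv : Fin m → ℝ)
    (K₀ lam₁ lam₂ : ℝ) (hK₀ : 0 < K₀) (hlam₁ : 0 < lam₁) (hlam₂ : 0 < lam₂)
    (Pinf Piinf : Matrix (Fin n) (Fin n) ℝ)
    (Thbstar : Matrix (Fin m) (Fin n) ℝ)
    -- (c) exponential stability of `A + Ā + BΘ̄*`
    (hexp : ∀ t : ℝ, 0 ≤ t →
      frobNorm (matExp (t • (A + Abar + B * Thbstar)ᵀ)) ≤ K₀ * Real.exp (-lam₂ * t))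
    (pinf : Fin n → ℝ)
    -- (e) the algebraic equation for `p∞`
    (hpinf : (A + Abar + B * Thbstar)ᵀ.mulVec pinf
        + (C + Cbar + D * Thbstar)ᵀ.mulVec (Pinf.mulVec sig)
        + Thbstarᵀ.mulVec rv + Piinf.mulVec b + qv = 0) :
    ∃ K > (0:ℝ), ∃ lam : ℝ, 0 < lam ∧ lam ≤ min lam₁ lam₂ ∧
      ∀ T : ℝ, 0 < T →
      ∀ P Pi0 : ℝ → Matrix (Fin n) (Fin n) ℝ, ∀ ThbT : ℝ → Matrix (Fin m) (Fin n) ℝ,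
      ∀ p : ℝ → Fin n → ℝ,
        -- (a) continuity and uniform boundedness of `P`
        (∀ i j, ContinuousOn (fun t => P t i j) (Set.Icc 0 T)) →
        (∀ i j, ContinuousOn (fun t => Pi0 t i j) (Set.Icc 0 T)) →
        (∀ i j, ContinuousOn (fun t => ThbT t i j) (Set.Icc 0 T)) →
        (∀ t ∈ Set.Icc (0:ℝ) T, (P t).IsSymm) →
        (∀ t ∈ Set.Icc (0:ℝ) T, (Pi0 t).IsSymm) →
        (∀ t ∈ Set.Icc (0:ℝ) T, frobNorm (P t) ≤ K₀) →
        -- (b) exponential convergence of the coefficients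
        (∀ t ∈ Set.Icc (0:ℝ) T,
          frobNorm (P t - Pinf) ≤ K₀ * Real.exp (-lam₁ * (T - t))) →
        (∀ t ∈ Set.Icc (0:ℝ) T,
          frobNorm (Pi0 t - Piinf) ≤ K₀ * Real.exp (-lam₁ * (T - t))) →
        (∀ t ∈ Set.Icc (0:ℝ) T,
          frobNorm (ThbT t - Thbstar) ≤ K₀ * Real.exp (-lam₁ * (T - t))) →
        -- (d) the backward ODE for `p`, terminal condition and uniform bound
        (∀ t ∈ Set.Icc (0:ℝ) T,
          HasDerivAt p
            (-((A + Abar + B * ThbT t)ᵀ.mulVec (p t))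
              - (C + Cbar + D * ThbT t)ᵀ.mulVec ((P t).mulVec sig)
              - (ThbT t)ᵀ.mulVec rv - (Pi0 t).mulVec b - qv) t) →
        p T = 0 →
        (∀ t ∈ Set.Icc (0:ℝ) T, eNorm (p t) ≤ K₀) →
        ∀ t ∈ Set.Icc (0:ℝ) T,
          eNorm (p t - pinf) ≤ K * Real.exp (-lam * (T - t)) := by
  set F := drift A Abar C Cbar B D b sig qv rv
  set N := (A + Abar + B * Thbstar)ᵀ
  set μ := min lam₁ lam₂
  have hμ : 0 < μ := lt_min hlam₁ hlam₂
  set C₁ := (‖B‖ * K₀ + ‖D‖ * K₀ * ‖toLp 2 sig‖ + ‖toLp 2 rv‖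
    + ‖C + Cbar + D * Thbstar‖ * ‖toLp 2 sig‖ + ‖toLp 2 b‖) * K₀
  refine ⟨K₀ * ‖toLp 2 pinf‖ + K₀ * C₁ * (2 / μ) + 1, by positivity, μ / 2, half_pos hμ,
    half_le_self hμ.le, ?_⟩
  intro T _ P Pi0 ThbT p _ _ _ _ _ hPK hPconv hPiconv hThconv hode hpT hpK t ⟨ht0, htT⟩
  simp only [frobNorm_eq_norm, eNorm_eq_norm] at *
  have hFinf : F Thbstar Pinf Piinf pinf = 0 := hpinf
  set f := fun u => F (ThbT u) (P u) (Pi0 u) (p u) - F Thbstar Pinf Piinf pinf - N *ᵥ (p u - pinf)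
  have hp : ∀ u ∈ Icc t T, HasDerivAt p (-(N *ᵥ (p u - pinf)) - f u) u := fun u hu =>
    (hode u ⟨ht0.trans hu.1, hu.2⟩).congr_deriv <| by
      simp only [f, hFinf]; simp only [F, drift]; abel
  have hf : ∀ u ∈ Icc t T, ‖toLp 2 (f u)‖ ≤ C₁ * exp (-lam₁ * (T - u)) := by
    intro u hu
    have hu0 : u ∈ Icc 0 T := ⟨ht0.trans hu.1, hu.2⟩
    calc _ ≤ _ := norm_drift_sub_drift_sub_le ..
      _ ≤ (‖B‖ * K₀ + ‖D‖ * K₀ * ‖toLp 2 sig‖ + ‖toLp 2 rv‖) * (K₀ * exp (-lam₁ * (T - u)))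
          + ‖C + Cbar + D * Thbstar‖ * ‖toLp 2 sig‖ * (K₀ * exp (-lam₁ * (T - u)))
          + ‖toLp 2 b‖ * (K₀ * exp (-lam₁ * (T - u))) := by
        gcongr
        exacts [hpK u hu0, hPK u hu0, hThconv u hu0, hPconv u hu0, hPiconv u hu0]
      _ = _ := by ring
  have h := norm_toLp_sub_le_of_hasDerivAt htT hexp hp hf
  rw [hpT, zero_sub, toLp_neg, norm_neg] at h
  refine h.trans ((add_mul_exp_neg_le (by positivity) (by positivity) hμ (min_le_right _ _)
    (sub_nonneg.2 htT)).trans ?_)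
  exact mul_le_mul_of_nonneg_right (le_add_of_nonneg_right zero_le_one) (exp_pos _).le

/-- exponential convergence `|p(t) - p∞| ≤ K e^{-λ(T-t)}` of the solution
of the backward linear ODE for `p` towards the solution `p∞` of the corresponding
algebraic equation, with constants `K > 0` and `λ ∈ (0, min{λ₁, λ₂}]` independent of
`T`. -/
theorem p_convergence {n m : ℕ} (hn : 0 < n) (hm : 0 < m)
    (A Abar C Cbar : Matrix (Fin n) (Fin n) ℝ)
    (B D : Matrix (Fin n) (Fin m) ℝ)
    (b sig qv : Fin n → ℝ) (rv : Fin m → ℝ)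
    (K₀ lam₁ lam₂ : ℝ) (hK₀ : 0 < K₀) (hlam₁ : 0 < lam₁) (hlam₂ : 0 < lam₂)
    (hne : lam₁ ≠ lam₂)
    (Pinf Piinf : Matrix (Fin n) (Fin n) ℝ)
    (hPinf : Pinf.IsSymm) (hPiinf : Piinf.IsSymm)
    (Thbstar : Matrix (Fin m) (Fin n) ℝ)
    -- (c) exponential stability of `A + Ā + BΘ̄*`
    (hexp : ∀ t : ℝ, 0 ≤ t →
      frobNorm (matExp (t • (A + Abar + B * Thbstar)ᵀ)) ≤ K₀ * Real.exp (-lam₂ * t))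
    (pinf : Fin n → ℝ)
    -- (e) the algebraic equation for `p∞`
    (hpinf : (A + Abar + B * Thbstar)ᵀ.mulVec pinf
        + (C + Cbar + D * Thbstar)ᵀ.mulVec (Pinf.mulVec sig)
        + Thbstarᵀ.mulVec rv + Piinf.mulVec b + qv = 0) :
    ∃ K > (0:ℝ), ∃ lam : ℝ, 0 < lam ∧ lam ≤ min lam₁ lam₂ ∧
      ∀ T : ℝ, 0 < T →
      ∀ P Pi0 : ℝ → Matrix (Fin n) (Fin n) ℝ, ∀ ThbT : ℝ → Matrix (Fin m) (Fin n) ℝ,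
      ∀ p : ℝ → Fin n → ℝ,
        -- (a) continuity and uniform boundedness of `P`
        (∀ i j, ContinuousOn (fun t => P t i j) (Set.Icc 0 T)) →
        (∀ i j, ContinuousOn (fun t => Pi0 t i j) (Set.Icc 0 T)) →
        (∀ i j, ContinuousOn (fun t => ThbT t i j) (Set.Icc 0 T)) →
        (∀ t ∈ Set.Icc (0:ℝ) T, (P t).IsSymm) →
        (∀ t ∈ Set.Icc (0:ℝ) T, (Pi0 t).IsSymm) →
        (∀ t ∈ Set.Icc (0:ℝ) T, frobNorm (P t) ≤ K₀) →
        -- (b) exponential convergence of the coefficients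
        (∀ t ∈ Set.Icc (0:ℝ) T,
          frobNorm (P t - Pinf) ≤ K₀ * Real.exp (-lam₁ * (T - t))) →
        (∀ t ∈ Set.Icc (0:ℝ) T,
          frobNorm (Pi0 t - Piinf) ≤ K₀ * Real.exp (-lam₁ * (T - t))) →
        (∀ t ∈ Set.Icc (0:ℝ) T,
          frobNorm (ThbT t - Thbstar) ≤ K₀ * Real.exp (-lam₁ * (T - t))) →
        -- (d) the backward ODE for `p`, terminal condition and uniform bound
        (∀ t ∈ Set.Icc (0:ℝ) T,
          HasDerivAt p
            (-((A + Abar + B * ThbT t)ᵀ.mulVec (p t))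
              - (C + Cbar + D * ThbT t)ᵀ.mulVec ((P t).mulVec sig)
              - (ThbT t)ᵀ.mulVec rv - (Pi0 t).mulVec b - qv) t) →
        p T = 0 →
        (∀ t ∈ Set.Icc (0:ℝ) T, eNorm (p t) ≤ K₀) →
        ∀ t ∈ Set.Icc (0:ℝ) T,
          eNorm (p t - pinf) ≤ K * Real.exp (-lam * (T - t)) :=
  p_convergence_general A Abar C Cbar B D b sig qv rv K₀ lam₁ lam₂ hK₀ hlam₁ hlam₂ Pinf Piinf
    Thbstar hexp pinf hpinf
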